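/- arXiv:math/0407380 — 6 statements merged into one kernel-verified Lean document; each statement's English description precedes it below -/
import Mathlib

section
/- The functions u₀ and u₁ are analytic on U and both satisfy there the differential equation in normal form: for every z ∈ U and for u = u₀ and u = u₁, u″(z) + (a/(4z²) + b/(4(z−1)²) + c/(4z²(z−1)²))·u(z) = 0. -/
open Complex

/-- The Gauss hypergeometric series `₂F₁(p,q;r;z) = ∑_{n≥0} (p)ₙ(q)ₙ/((r)ₙ n!) zⁿ`. -/
noncomputable def hyp2F1 (p q r z : ℂ) : ℂ :=
  ∑' n : ℕ, (Polynomial.eval p (ascPochhammer ℂ n) * Polynomial.eval q (ascPochhammer ℂ n) /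
      (Polynomial.eval r (ascPochhammer ℂ n) * (n.factorial : ℂ))) * z ^ n

/-- The open set `U = {z : |z| < 1, z ∉ ℝ_{≤0}}`. -/
def hypU : Set ℂ := {z : ℂ | ‖z‖ < 1 ∧ ¬(z.im = 0 ∧ z.re ≤ 0)}

/-- `u₀(z) = z^{γ/2} (1−z)^{(α+β−γ+1)/2} ₂F₁(α,β;γ;z)` (principal branches). -/
noncomputable def hypu0 (α β γ : ℚ) (z : ℂ) : ℂ :=
  z ^ ((γ : ℂ) / 2) * (1 - z) ^ (((α : ℂ) + (β : ℂ) - (γ : ℂ) + 1) / 2) *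
    hyp2F1 (α : ℂ) (β : ℂ) (γ : ℂ) z

/-- `u₁(z) = z^{1−γ/2} (1−z)^{(α+β−γ+1)/2} ₂F₁(α−γ+1,β−γ+1;2−γ;z)` (principal branches). -/
noncomputable def hypu1 (α β γ : ℚ) (z : ℂ) : ℂ :=
  z ^ (1 - (γ : ℂ) / 2) * (1 - z) ^ (((α : ℂ) + (β : ℂ) - (γ : ℂ) + 1) / 2) *
    hyp2F1 ((α : ℂ) - (γ : ℂ) + 1) ((β : ℂ) - (γ : ℂ) + 1) (2 - (γ : ℂ)) z

/-!
`hyp2F1` is Mathlib's `₂F₁`, whose series has radius of convergence at least `1` when `r` is not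
a nonpositive integer. Differentiating termwise, the recursion
`(n + 1) (r + n) cₙ₊₁ = (p + n) (q + n) cₙ` for its coefficients is exactly the hypergeometric
equation `z (1 - z) F'' + (r - (p + q + 1) z) F' - p q F = 0` on the unit disc.

For `u = φ F` with `φ = z ^ s (1 - z) ^ t` one has `φ' = φ L`, `L = s / z - t / (1 - z)`, hence
`u'' = φ (F'' + 2 L F' + (L² + L') F)`. The choice `2 s = r`, `2 t = p + q + 1 - r` makes
`2 L F'` cancel the first-order term of the hypergeometric equation, and what remains is the
normal form, whose invariant depends only on the squares of the exponent differences `1 - r`,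
`r - p - q`, `p - q`. These agree for `u₀` and `u₁`, the cases `(α, β, γ)` and
`(α - γ + 1, β - γ + 1, 2 - γ)`.
-/

noncomputable def derivCoeff (c : ℕ → ℂ) (n : ℕ) : ℂ := (n + 1) * c (n + 1)

section PowerSeries

open FormalMultilinearSeries

variable {c : ℕ → ℂ} {z S : ℂ}

theorem radius_ofScalars_le_radius_ofScalars_derivCoeff :
    (ofScalars ℂ c).radius ≤ (ofScalars ℂ (derivCoeff c)).radius := by
  refine (radius_le_radius_derivSeries _).trans (radius_le_of_le fun n => ?_)
  rw [ofScalars_norm, norm_apply_eq_norm_coef]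
  calc ‖derivCoeff c n‖ = ‖(ofScalars ℂ c).derivSeries.coeff n 1‖ := by
        simp [derivCoeff]
    _ ≤ _ := by simpa using ((ofScalars ℂ c).derivSeries.coeff n).le_opNorm 1

theorem hasSum_ofScalarsSum (hz : ‖z‖ₑ < (ofScalars ℂ c).radius) :
    HasSum (fun n => c n * z ^ n) (ofScalarsSum c z) := by
  have h := (ofScalars ℂ c).hasSum (x := z) (by simpa using hz)
  simp only [ofScalars_apply_eq, smul_eq_mul] at h
  exact h

theorem hasDerivAt_ofScalarsSum (hz : ‖z‖ₑ < (ofScalars ℂ c).radius) :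
    HasDerivAt (ofScalarsSum c) (ofScalarsSum (derivCoeff c) z) z := by
  have hz' := hz.trans_le (radius_le_radius_derivSeries (ofScalars ℂ c))
  have h := (ContinuousLinearMap.apply ℂ ℂ (1 : ℂ)).hasSum
    ((ofScalars ℂ c).derivSeries.hasSum (x := z) (by simpa using hz'))
  have hterm : ∀ n, (ContinuousLinearMap.apply ℂ ℂ (1 : ℂ))
      ((ofScalars ℂ c).derivSeries n fun _ => z) = derivCoeff c n * z ^ n := by
    intro n
    simp [derivCoeff, mul_comm]
  simp only [hterm] at h
  refine ((ofScalars ℂ c).hasFDerivAt_sum hz).hasDerivAt.congr_deriv (h.unique ?_)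
  exact hasSum_ofScalarsSum (hz.trans_le radius_ofScalars_le_radius_ofScalars_derivCoeff)

theorem HasSum.natCast_mul_of_derivCoeff (h : HasSum (fun n => derivCoeff c n * z ^ n) S) :
    HasSum (fun n => n * c n * z ^ n) (z * S) := by
  refine (hasSum_nat_add_iff' 1).mp ?_
  simp only [Finset.sum_range_one, Nat.cast_zero, zero_mul, sub_zero]
  refine (h.mul_left z).congr_fun fun n => ?_
  simp only [derivCoeff]
  push_cast
  ring

/-- Both `z F'' + r F'` and `z (z F'' + (p + q + 1) F') + p q F` have coefficients
`(p + n) (q + n) cₙ`: for the first this is the recursion, for the second it is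
`θ (θ + p + q) + p q` with `θ = z d/dz`. -/
theorem hypergeometric_ode_of_hasSum {p q r F F₁ F₂ : ℂ}
    (hc : ∀ n : ℕ, (n + 1) * (r + n) * c (n + 1) = (p + n) * (q + n) * c n)
    (hF : HasSum (fun n => c n * z ^ n) F)
    (hF₁ : HasSum (fun n => derivCoeff c n * z ^ n) F₁)
    (hF₂ : HasSum (fun n => derivCoeff (derivCoeff c) n * z ^ n) F₂) :
    z * (1 - z) * F₂ + (r - (p + q + 1) * z) * F₁ - p * q * F = 0 := by
  have hθ (s : ℂ) : HasSum (fun n => (n + s) * derivCoeff c n * z ^ n) (z * F₂ + s * F₁) :=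
    (hF₂.natCast_mul_of_derivCoeff.add (hF₁.mul_left s)).congr_fun fun n => by ring
  have hX : HasSum (fun n => (p + n) * (q + n) * c n * z ^ n) (z * F₂ + r * F₁) := by
    refine (hθ r).congr_fun fun n => ?_
    rw [derivCoeff, ← hc]
    ring
  have hY : HasSum (fun n => (p + n) * (q + n) * c n * z ^ n)
      (z * (z * F₂ + (p + q + 1) * F₁) + p * q * F) := by
    have h : HasSum (fun n => derivCoeff (fun n => (n + p + q) * c n) n * z ^ n)
        (z * F₂ + (p + q + 1) * F₁) := by
      refine (hθ (p + q + 1)).congr_fun fun n => ?_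
      simp only [derivCoeff]
      push_cast
      ring
    exact (h.natCast_mul_of_derivCoeff.add (hF.mul_left (p * q))).congr_fun fun n => by ring
  linear_combination hX.unique hY

end PowerSeries

theorem ordinaryHypergeometricCoefficient_succ {𝕂 : Type*} [Field 𝕂] [CharZero 𝕂]
    {a b c : 𝕂} {n : ℕ} (hn : c + n ≠ 0) :
    (n + 1) * (c + n) * ordinaryHypergeometricCoefficient a b c (n + 1) =
      (a + n) * (b + n) * ordinaryHypergeometricCoefficient a b c n := by
  have : (n + 1 : 𝕂) ≠ 0 := by exact_mod_cast n.succ_ne_zero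
  simp only [ordinaryHypergeometricCoefficient, ascPochhammer_succ_eval, Nat.factorial_succ,
    Nat.cast_mul, Nat.cast_succ, mul_inv]
  field_simp

theorem one_le_radius_ordinaryHypergeometricSeries {a b c : ℂ} (hc : ∀ k : ℕ, c ≠ -k) :
    1 ≤ (ordinaryHypergeometricSeries ℂ a b c).radius := by
  by_cases ha : ∃ k : ℕ, a = -k
  · obtain ⟨k, rfl⟩ := ha
    simp [ordinaryHypergeometric_radius_top_of_neg_nat₁]
  by_cases hb : ∃ k : ℕ, b = -k
  · obtain ⟨k, rfl⟩ := hb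
    simp [ordinaryHypergeometric_radius_top_of_neg_nat₂]
  push Not at ha hb
  refine (ordinaryHypergeometricSeries_radius_eq_one ℂ a b c fun k => ?_).ge
  refine ⟨fun h => ha k ?_, fun h => hb k ?_, fun h => hc k ?_⟩ <;> linear_combination h

theorem hyp2F1_eq_ordinaryHypergeometric (p q r z : ℂ) : hyp2F1 p q r z = ₂F₁ p q r z := by
  rw [hyp2F1, ordinaryHypergeometric, ordinaryHypergeometric_sum_eq]
  refine tsum_congr fun n => ?_
  rw [smul_eq_mul, div_eq_mul_inv, mul_inv]
  ring

section NormalForm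

open Filter Topology

theorem deriv_deriv_mul_of_logDeriv {𝕜 : Type*} [NontriviallyNormedField 𝕜]
    {φ L L' F F₁ F₂ : 𝕜 → 𝕜} {S : Set 𝕜} (hS : IsOpen S)
    (hφ : ∀ y ∈ S, HasDerivAt φ (φ y * L y) y) (hL : ∀ y ∈ S, HasDerivAt L (L' y) y)
    (hF : ∀ y ∈ S, HasDerivAt F (F₁ y) y) (hF₁ : ∀ y ∈ S, HasDerivAt F₁ (F₂ y) y)
    {z : 𝕜} (hz : z ∈ S) :
    deriv (deriv fun y => φ y * F y) z =
      φ z * (F₂ z + 2 * L z * F₁ z + (L z ^ 2 + L' z) * F z) := by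
  have hd : deriv (fun y => φ y * F y) =ᶠ[𝓝 z] fun y => φ y * (L y * F y + F₁ y) := by
    filter_upwards [hS.mem_nhds hz] with y hy
    exact ((hφ y hy).mul (hF y hy)).deriv.trans (by ring)
  rw [hd.deriv_eq]
  exact ((hφ z hz).mul (((hL z hz).mul (hF z hz)).add (hF₁ z hz))).deriv.trans
    (by simp only [Pi.add_apply, Pi.mul_apply]; ring)

theorem hasDerivAt_cpow_mul_one_sub_cpow {s t y : ℂ} (hy : y ∈ slitPlane)
    (hy₁ : 1 - y ∈ slitPlane) :
    HasDerivAt (fun y => y ^ s * (1 - y) ^ t)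
      (y ^ s * (1 - y) ^ t * (s / y - t / (1 - y))) y := by
  refine ((hasStrictDerivAt_cpow_const hy).hasDerivAt.mul
    (((hasDerivAt_id y).const_sub 1).cpow_const hy₁)).congr_deriv ?_
  simp only [id]
  rw [cpow_sub _ _ (slitPlane_ne_zero hy), cpow_sub _ _ (slitPlane_ne_zero hy₁), cpow_one,
    cpow_one]
  field_simp [slitPlane_ne_zero hy, slitPlane_ne_zero hy₁]
  ring

theorem hasDerivAt_div_sub_div_one_sub {s t y : ℂ} (hy : y ≠ 0) (hy₁ : 1 - y ≠ 0) :
    HasDerivAt (fun y => s / y - t / (1 - y)) (-s / y ^ 2 - t / (1 - y) ^ 2) y := by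
  refine (((hasDerivAt_const y s).div (hasDerivAt_id y) hy).sub
    ((hasDerivAt_const y t).div ((hasDerivAt_id y).const_sub 1) hy₁)).congr_deriv ?_
  simp only [id]
  field_simp
  ring

/-- The conditions on `a`, `b`, `c` say that the exponent differences of the normal form at
`0`, `1`, `∞` are those of the hypergeometric equation: `1 - r`, `r - p - q`, `p - q`. -/
theorem normalForm_eq_zero_of_hypergeometric_ode {p q r s t a b c z F F₁ F₂ : ℂ}
    (hz : z ≠ 0) (hz₁ : 1 - z ≠ 0) (hs : 2 * s = r) (ht : 2 * t = p + q + 1 - r)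
    (hac : a + c = 1 - (1 - r) ^ 2) (hbc : b + c = 1 - (r - p - q) ^ 2)
    (hab : a + b = 1 - (p - q) ^ 2)
    (hode : z * (1 - z) * F₂ + (r - (p + q + 1) * z) * F₁ - p * q * F = 0) :
    F₂ + 2 * (s / z - t / (1 - z)) * F₁ +
        ((s / z - t / (1 - z)) ^ 2 + (-s / z ^ 2 - t / (1 - z) ^ 2)) * F +
      (a / (4 * z ^ 2) + b / (4 * (z - 1) ^ 2) + c / (4 * z ^ 2 * (z - 1) ^ 2)) * F = 0 := by
  have hc : c = 4 * s * t - 2 * p * q := by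
    linear_combination (hac + hbc - hab) / 2 - 2 * t * hs - r * ht
  rw [show (z - 1) ^ 2 = (1 - z) ^ 2 by ring]
  field_simp
  linear_combination 4 * z * (1 - z) * hode + 4 * z * (1 - z) ^ 2 * F₁ * hs
    - 4 * z ^ 2 * (1 - z) * F₁ * ht + (1 - z) ^ 2 * F * hac + (1 - z) ^ 2 * (2 * s + r - 2) * F * hs
    + z ^ 2 * F * hbc + z ^ 2 * (2 * t - 1 + p + q - r) * F * ht + 2 * z * (1 - z) * F * hc

end NormalForm

section HypergeometricNormalForm

open FormalMultilinearSeries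

variable {p q r : ℂ}

theorem exists_hasDerivAt_ordinaryHypergeometric_ode (hr : ∀ k : ℕ, r ≠ -k) :
    ∃ F₁ F₂ : ℂ → ℂ, ∀ z : ℂ, ‖z‖ < 1 →
      HasDerivAt (₂F₁ p q r) (F₁ z) z ∧ HasDerivAt F₁ (F₂ z) z ∧
        z * (1 - z) * F₂ z + (r - (p + q + 1) * z) * F₁ z - p * q * ₂F₁ p q r z = 0 := by
  set c := ordinaryHypergeometricCoefficient p q r
  refine ⟨ofScalarsSum (derivCoeff c), ofScalarsSum (derivCoeff (derivCoeff c)), fun z hz => ?_⟩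
  have h₀ : ‖z‖ₑ < (ofScalars ℂ c).radius :=
    (by simpa [enorm_eq_nnnorm, ← NNReal.coe_lt_one] using hz : ‖z‖ₑ < 1).trans_le
      (one_le_radius_ordinaryHypergeometricSeries hr)
  have h₁ := h₀.trans_le radius_ofScalars_le_radius_ofScalars_derivCoeff
  have h₂ := h₁.trans_le radius_ofScalars_le_radius_ofScalars_derivCoeff
  have hrn (n : ℕ) : r + n ≠ 0 := fun h => hr n (by linear_combination h)
  exact ⟨hasDerivAt_ofScalarsSum h₀, hasDerivAt_ofScalarsSum h₁,
    hypergeometric_ode_of_hasSum (fun n => ordinaryHypergeometricCoefficient_succ (hrn n))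
      (hasSum_ofScalarsSum h₀) (hasSum_ofScalarsSum h₁) (hasSum_ofScalarsSum h₂)⟩

theorem one_sub_mem_slitPlane {z : ℂ} (hz : ‖z‖ < 1) : 1 - z ∈ slitPlane := by
  simpa [sub_eq_add_neg] using mem_slitPlane_of_norm_lt_one ((norm_neg z).trans_lt hz)

variable {s t : ℂ}

theorem analyticOnNhd_cpow_mul_ordinaryHypergeometric (hr : ∀ k : ℕ, r ≠ -k) :
    AnalyticOnNhd ℂ (fun y => y ^ s * (1 - y) ^ t * ₂F₁ p q r y)
      (Metric.ball 0 1 ∩ slitPlane) := by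
  obtain ⟨F₁, F₂, hF⟩ := exists_hasDerivAt_ordinaryHypergeometric_ode (p := p) (q := q) hr
  refine DifferentiableOn.analyticOnNhd (fun y ⟨hy, hy'⟩ => ?_)
    (Metric.isOpen_ball.inter isOpen_slitPlane)
  rw [mem_ball_zero_iff] at hy
  exact ((hasDerivAt_cpow_mul_one_sub_cpow hy' (one_sub_mem_slitPlane hy)).mul
    (hF y hy).1).differentiableAt.differentiableWithinAt

theorem deriv_deriv_cpow_mul_ordinaryHypergeometric_add {a b c : ℂ} (hr : ∀ k : ℕ, r ≠ -k)
    (hs : 2 * s = r) (ht : 2 * t = p + q + 1 - r)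
    (hac : a + c = 1 - (1 - r) ^ 2) (hbc : b + c = 1 - (r - p - q) ^ 2)
    (hab : a + b = 1 - (p - q) ^ 2) {z : ℂ} (hz : z ∈ Metric.ball 0 1 ∩ slitPlane) :
    deriv (deriv fun y => y ^ s * (1 - y) ^ t * ₂F₁ p q r y) z +
      (a / (4 * z ^ 2) + b / (4 * (z - 1) ^ 2) + c / (4 * z ^ 2 * (z - 1) ^ 2)) *
        (z ^ s * (1 - z) ^ t * ₂F₁ p q r z) = 0 := by
  obtain ⟨F₁, F₂, hF⟩ := exists_hasDerivAt_ordinaryHypergeometric_ode (p := p) (q := q) hr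
  have hball {y : ℂ} (hy : y ∈ Metric.ball 0 1 ∩ slitPlane) : ‖y‖ < 1 := mem_ball_zero_iff.mp hy.1
  rw [deriv_deriv_mul_of_logDeriv (Metric.isOpen_ball.inter isOpen_slitPlane)
    (fun y hy => hasDerivAt_cpow_mul_one_sub_cpow hy.2 (one_sub_mem_slitPlane (hball hy)))
    (fun y hy => hasDerivAt_div_sub_div_one_sub (slitPlane_ne_zero hy.2)
      (slitPlane_ne_zero (one_sub_mem_slitPlane (hball hy))))
    (fun y hy => (hF y (hball hy)).1) (fun y hy => (hF y (hball hy)).2.1) hz]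
  linear_combination (z ^ s * (1 - z) ^ t) * normalForm_eq_zero_of_hypergeometric_ode
    (slitPlane_ne_zero hz.2) (slitPlane_ne_zero (one_sub_mem_slitPlane (hball hz)))
    hs ht hac hbc hab (hF z (hball hz)).2.2

end HypergeometricNormalForm

theorem hypU_eq : hypU = Metric.ball 0 1 ∩ slitPlane := by
  ext z
  simp only [hypU, Set.mem_ofPred_eq, Set.mem_inter_iff, mem_ball_zero_iff,
    mem_slitPlane_iff, not_and_or, not_le, or_comm]

theorem ratCast_ne_neg_natCast {x : ℚ} (hx : 0 < x) (k : ℕ) : (x : ℂ) ≠ -k := by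
  intro h
  have h' : (x : ℝ) = -k := by simpa using congrArg re h
  have : (0 : ℝ) < x := by exact_mod_cast hx
  linarith [(k.cast_nonneg : (0 : ℝ) ≤ k)]

theorem stmt_2_general (α β γ : ℚ)
    (h0 : 0 < α) (h1 : α < β) (h2 : β < γ) (h3 : γ < 1)
    (a b c : ℂ)
    (ha : a = (γ : ℂ) * (1 - (α : ℂ) - (β : ℂ)) + 2 * (α : ℂ) * (β : ℂ))
    (hb : b = ((α : ℂ) + (β : ℂ)) * ((γ : ℂ) - (α : ℂ) - (β : ℂ)) +
        2 * (α : ℂ) * (β : ℂ) - (γ : ℂ) + 1)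
    (hc : c = (γ : ℂ) * ((α : ℂ) + (β : ℂ) - (γ : ℂ) + 1) - 2 * (α : ℂ) * (β : ℂ)) :
    AnalyticOnNhd ℂ (hypu0 α β γ) hypU ∧ AnalyticOnNhd ℂ (hypu1 α β γ) hypU ∧
      (∀ z ∈ hypU,
        deriv (deriv (hypu0 α β γ)) z +
          (a / (4 * z ^ 2) + b / (4 * (z - 1) ^ 2) + c / (4 * z ^ 2 * (z - 1) ^ 2)) *
            hypu0 α β γ z = 0) ∧
      (∀ z ∈ hypU,
        deriv (deriv (hypu1 α β γ)) z +
          (a / (4 * z ^ 2) + b / (4 * (z - 1) ^ 2) + c / (4 * z ^ 2 * (z - 1) ^ 2)) *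
            hypu1 α β γ z = 0) := by
  have hγ₀ : ∀ k : ℕ, (γ : ℂ) ≠ -k := ratCast_ne_neg_natCast (by linarith)
  have hγ₁ : ∀ k : ℕ, 2 - (γ : ℂ) ≠ -k := by
    simpa using ratCast_ne_neg_natCast (x := 2 - γ) (by linarith)
  have hu₀ : hypu0 α β γ = fun z => z ^ ((γ : ℂ) / 2) *
      (1 - z) ^ (((α : ℂ) + β - γ + 1) / 2) * ₂F₁ (α : ℂ) β γ z := by
    funext z
    rw [hypu0, hyp2F1_eq_ordinaryHypergeometric]
  have hu₁ : hypu1 α β γ = fun z => z ^ (1 - (γ : ℂ) / 2) *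
      (1 - z) ^ (((α : ℂ) + β - γ + 1) / 2) * ₂F₁ ((α : ℂ) - γ + 1) (β - γ + 1) (2 - γ) z := by
    funext z
    rw [hypu1, hyp2F1_eq_ordinaryHypergeometric]
  subst ha hb hc
  rw [hypU_eq, hu₀, hu₁]
  exact ⟨analyticOnNhd_cpow_mul_ordinaryHypergeometric hγ₀,
    analyticOnNhd_cpow_mul_ordinaryHypergeometric hγ₁,
    fun z hz => deriv_deriv_cpow_mul_ordinaryHypergeometric_add hγ₀
      (by ring) (by ring) (by ring) (by ring) (by ring) hz,
    fun z hz => deriv_deriv_cpow_mul_ordinaryHypergeometric_add hγ₁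
      (by ring) (by ring) (by ring) (by ring) (by ring) hz⟩

/-- `u₀` and `u₁` are analytic on `U` and satisfy there the differential
equation in normal form `u″ + (a/(4z²) + b/(4(z−1)²) + c/(4z²(z−1)²)) u = 0`. -/
theorem stmt_2 (α β γ : ℚ)
    (hα : ∃ n : ℕ, 0 < n ∧ α = 1 / n) (hβ : ∃ n : ℕ, 0 < n ∧ β = 1 / n)
    (hγ : ∃ n : ℕ, 0 < n ∧ γ = 1 / n)
    (h0 : 0 < α) (h1 : α < β) (h2 : β < γ) (h3 : γ < 1) (h4 : α + β < γ)
    (a b c : ℂ)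
    (ha : a = (γ : ℂ) * (1 - (α : ℂ) - (β : ℂ)) + 2 * (α : ℂ) * (β : ℂ))
    (hb : b = ((α : ℂ) + (β : ℂ)) * ((γ : ℂ) - (α : ℂ) - (β : ℂ)) +
        2 * (α : ℂ) * (β : ℂ) - (γ : ℂ) + 1)
    (hc : c = (γ : ℂ) * ((α : ℂ) + (β : ℂ) - (γ : ℂ) + 1) - 2 * (α : ℂ) * (β : ℂ)) :
    AnalyticOnNhd ℂ (hypu0 α β γ) hypU ∧ AnalyticOnNhd ℂ (hypu1 α β γ) hypU ∧
      (∀ z ∈ hypU,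
        deriv (deriv (hypu0 α β γ)) z +
          (a / (4 * z ^ 2) + b / (4 * (z - 1) ^ 2) + c / (4 * z ^ 2 * (z - 1) ^ 2)) *
            hypu0 α β γ z = 0) ∧
      (∀ z ∈ hypU,
        deriv (deriv (hypu1 α β γ)) z +
          (a / (4 * z ^ 2) + b / (4 * (z - 1) ^ 2) + c / (4 * z ^ 2 * (z - 1) ^ 2)) *
            hypu1 α β γ z = 0) :=
  stmt_2_general α β γ h0 h1 h2 h3 a b c ha hb hc
end

section
/- Let V ⊆ ℂ be open with 0 ∉ V and 1 ∉ V, and let u : ℂ → ℂ be twice differentiable on V satisfying, for every z ∈ V, u″(z) + (a/(4z²) + b/(4(z−1)²) + c/(4z²(z−1)²))·u(z) = 0. Define on V the functions y₀ = u·u′, y₁ = u·u′ − u²/z, y₂ = u·u′ − u²/(z−1), and L = (1/4)·(a(y₀−y₁)² + b(y₀−y₂)² + c(y₁−y₂)²). Then for every z ∈ V and every i ∈ {0,1,2}: u(z)²·yᵢ′(z) = yᵢ(z)² − L(z). -/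
open Complex

/-
Each `yᵢ` has the shape `u u′ − g u²` with `g ∈ {0, 1/z, 1/(z−1)}`, and each such `g` solves
`g′ = −g²`. For any such `g`, the equation `u″ = −Q u` turns `u² (u u′ − g u²)′` into
`(u u′ − g u²)² − Q u⁴`. Finally `y₀ − y₁ = u²/z`, `y₀ − y₂ = u²/(z−1)` and
`y₁ − y₂ = u²/(z(z−1))`, so `L = Q u⁴` for the potential `Q` of the equation.
-/

/-- `y₀ = u·u′`. -/
noncomputable def yfun0 (u : ℂ → ℂ) (z : ℂ) : ℂ := u z * deriv u z

/-- `y₁ = u·u′ − u²/z`. -/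
noncomputable def yfun1 (u : ℂ → ℂ) (z : ℂ) : ℂ := u z * deriv u z - (u z) ^ 2 / z

/-- `y₂ = u·u′ − u²/(z−1)`. -/
noncomputable def yfun2 (u : ℂ → ℂ) (z : ℂ) : ℂ := u z * deriv u z - (u z) ^ 2 / (z - 1)

/-- `L = (1/4)(a(y₀−y₁)² + b(y₀−y₂)² + c(y₁−y₂)²)`. -/
noncomputable def Lfun (a b c : ℂ) (u : ℂ → ℂ) (z : ℂ) : ℂ :=
  (1 / 4) * (a * (yfun0 u z - yfun1 u z) ^ 2 + b * (yfun0 u z - yfun2 u z) ^ 2 +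
    c * (yfun1 u z - yfun2 u z) ^ 2)

noncomputable def potential (a b c z : ℂ) : ℂ :=
  a / (4 * z ^ 2) + b / (4 * (z - 1) ^ 2) + c / (4 * z ^ 2 * (z - 1) ^ 2)

theorem Lfun_eq_potential_mul_pow_four {a b c z : ℂ} (u : ℂ → ℂ) (hz₀ : z ≠ 0) (hz₁ : z ≠ 1) :
    Lfun a b c u z = potential a b c z * u z ^ 4 := by
  have hz₁' : z - 1 ≠ 0 := sub_ne_zero.mpr hz₁
  simp only [Lfun, yfun0, yfun1, yfun2, potential]
  field_simp
  ring

section Riccati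

variable {𝕜 : Type*} [NontriviallyNormedField 𝕜] {u g y : 𝕜 → 𝕜} {z Q : 𝕜}

theorem hasDerivAt_inv_sub (p : 𝕜) (hz : z ≠ p) :
    HasDerivAt (fun w => (w - p)⁻¹) (-((z - p)⁻¹) ^ 2) z :=
  (((hasDerivAt_id' z).sub_const p).fun_inv (sub_ne_zero.mpr hz)).congr_deriv <| by
    rw [inv_pow, neg_div, one_div]

theorem sq_mul_deriv_eq_sq_sub_mul_pow_four (hy : ∀ w, y w = u w * deriv u w - g w * u w ^ 2)
    (hg : HasDerivAt g (-g z ^ 2) z) (hu : DifferentiableAt 𝕜 u z)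
    (hu' : DifferentiableAt 𝕜 (deriv u) z) (hQ : deriv (deriv u) z = -Q * u z) :
    u z ^ 2 * deriv y z = y z ^ 2 - Q * u z ^ 4 := by
  have hderiv : HasDerivAt y
      (deriv u z * deriv u z + u z * deriv (deriv u) z -
        (-g z ^ 2 * u z ^ 2 + g z * (2 * u z * deriv u z))) z := by
    rw [show y = fun w => u w * deriv u w - g w * u w ^ 2 from funext hy]
    have hsq : HasDerivAt (fun w => u w ^ 2) (2 * u z * deriv u z) z := by
      simpa [mul_comm] using hu.hasDerivAt.fun_pow 2
    exact (hu.hasDerivAt.mul hu'.hasDerivAt).sub (hg.mul hsq)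
  rw [hderiv.deriv, hy, hQ]
  ring

end Riccati

theorem stmt_4_general (a b c : ℂ)
    (V : Set ℂ) (h0V : (0 : ℂ) ∉ V) (h1V : (1 : ℂ) ∉ V)
    (u : ℂ → ℂ)
    (hdiff : ∀ z ∈ V, DifferentiableAt ℂ u z ∧ DifferentiableAt ℂ (deriv u) z)
    (hode : ∀ z ∈ V,
      deriv (deriv u) z +
        (a / (4 * z ^ 2) + b / (4 * (z - 1) ^ 2) + c / (4 * z ^ 2 * (z - 1) ^ 2)) * u z = 0) :
    ∀ z ∈ V,
      (u z) ^ 2 * deriv (yfun0 u) z = (yfun0 u z) ^ 2 - Lfun a b c u z ∧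
      (u z) ^ 2 * deriv (yfun1 u) z = (yfun1 u z) ^ 2 - Lfun a b c u z ∧
      (u z) ^ 2 * deriv (yfun2 u) z = (yfun2 u z) ^ 2 - Lfun a b c u z := by
  intro z hz
  obtain ⟨hu, hu'⟩ := hdiff z hz
  have hz₀ : z ≠ 0 := ne_of_mem_of_not_mem hz h0V
  have hz₁ : z ≠ 1 := ne_of_mem_of_not_mem hz h1V
  have hQ : deriv (deriv u) z = -potential a b c z * u z := by
    unfold potential
    linear_combination hode z hz
  rw [Lfun_eq_potential_mul_pow_four u hz₀ hz₁]
  refine ⟨?_, ?_, ?_⟩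
  · exact sq_mul_deriv_eq_sq_sub_mul_pow_four (g := fun _ => 0) (fun w => by simp [yfun0])
      (by simpa using hasDerivAt_const z (0 : ℂ)) hu hu' hQ
  · exact sq_mul_deriv_eq_sq_sub_mul_pow_four (g := fun w => (w - 0)⁻¹)
      (fun w => by simp [yfun1, div_eq_inv_mul]) (hasDerivAt_inv_sub 0 hz₀) hu hu' hQ
  · exact sq_mul_deriv_eq_sq_sub_mul_pow_four (g := fun w => (w - 1)⁻¹)
      (fun w => by simp [yfun2, div_eq_inv_mul]) (hasDerivAt_inv_sub 1 hz₁) hu hu' hQ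

/-- if `u` is twice differentiable on an open set `V ⊆ ℂ` avoiding `0` and `1`,
and satisfies there `u″ + (a/(4z²) + b/(4(z−1)²) + c/(4z²(z−1)²)) u = 0`, then the functions
`y₀ = u u′`, `y₁ = u u′ − u²/z`, `y₂ = u u′ − u²/(z−1)` satisfy `u² yᵢ′ = yᵢ² − L` on `V`,
where `L = (1/4)(a(y₀−y₁)² + b(y₀−y₂)² + c(y₁−y₂)²)`. -/
theorem stmt_4 (α β γ : ℚ)
    (hα : ∃ n : ℕ, 0 < n ∧ α = 1 / n) (hβ : ∃ n : ℕ, 0 < n ∧ β = 1 / n)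
    (hγ : ∃ n : ℕ, 0 < n ∧ γ = 1 / n)
    (h0 : 0 < α) (h1 : α < β) (h2 : β < γ) (h3 : γ < 1) (h4 : α + β < γ)
    (a b c : ℂ)
    (ha : a = (γ : ℂ) * (1 - (α : ℂ) - (β : ℂ)) + 2 * (α : ℂ) * (β : ℂ))
    (hb : b = ((α : ℂ) + (β : ℂ)) * ((γ : ℂ) - (α : ℂ) - (β : ℂ)) +
        2 * (α : ℂ) * (β : ℂ) - (γ : ℂ) + 1)
    (hc : c = (γ : ℂ) * ((α : ℂ) + (β : ℂ) - (γ : ℂ) + 1) - 2 * (α : ℂ) * (β : ℂ))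
    (V : Set ℂ) (hV : IsOpen V) (h0V : (0 : ℂ) ∉ V) (h1V : (1 : ℂ) ∉ V)
    (u : ℂ → ℂ)
    (hdiff : ∀ z ∈ V, DifferentiableAt ℂ u z ∧ DifferentiableAt ℂ (deriv u) z)
    (hode : ∀ z ∈ V,
      deriv (deriv u) z +
        (a / (4 * z ^ 2) + b / (4 * (z - 1) ^ 2) + c / (4 * z ^ 2 * (z - 1) ^ 2)) * u z = 0) :
    ∀ z ∈ V,
      (u z) ^ 2 * deriv (yfun0 u) z = (yfun0 u z) ^ 2 - Lfun a b c u z ∧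
      (u z) ^ 2 * deriv (yfun1 u) z = (yfun1 u z) ^ 2 - Lfun a b c u z ∧
      (u z) ^ 2 * deriv (yfun2 u) z = (yfun2 u z) ^ 2 - Lfun a b c u z :=
  stmt_4_general a b c V h0V h1V u hdiff hode
end

section
/- Set θ = Γ(γ)Γ(γ−α−β)/(Γ(γ−α)Γ(γ−β)). As the real variable x tends to 1 from the left within the interval (0,1), the following limits hold: u₀(x)²·(1−x)^{−(1+α+β−γ)} → θ², y₀(x)·(1−x)^{γ−α−β} → −(θ²/2)(α+β−γ+1), y₁(x)·(1−x)^{γ−α−β} → −(θ²/2)(α+β−γ+1), and y₂(x)·(1−x)^{γ−α−β} → −(θ²/2)(α+β−γ−1). -/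
open Complex Filter
open scoped Topology

/-!
Write `u₀(z) = z^g (1-z)^s F(z)` with `g = γ/2`, `s = (α+β-γ+1)/2`, `F = ₂F₁(α,β;γ;·)`. Then
`γ-α-β = 1-2s`, so the prescribed powers of `1-x` cancel the factors `(1-x)^s` exactly:
`u₀² (1-x)^{-2s} = x^{2g} F²` and `y₀ (1-x)^{1-2s} = x^{2g} F (g (1-x)/x · F - s F + (1-x) F')`,
while the corrections `u₀²/x` and `u₀²/(x-1)` in `y₁`, `y₂` contribute `0` and `-θ²` in the limit.
Everything thus reduces to `F(x) → θ` and `(1-x) F'(x) → 0` as `x → 1⁻`.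
The first is Abel's theorem applied to Gauss's summation `∑ (α)ₙ(β)ₙ/((γ)ₙ n!) = θ`, valid as
`γ > α+β`; Gauss's formula comes from integrating the binomial series `∑ (α)ₙ/n! tⁿ = (1-t)^{-α}`
against `t^{β-1}(1-t)^{γ-β-1}` term by term (monotone convergence) and evaluating Beta integrals.
The second is dominated convergence, using summability of the coefficients and
`n x^{n-1} (1-x) ≤ 1` on `[0,1]`.
-/

open Set MeasureTheory ProbabilityTheory

lemma Ring.choose_add_natCast_sub_one (a : ℝ) (n : ℕ) :
    Ring.choose (a + n - 1) n = (ascPochhammer ℝ n).eval a / n.factorial := by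
  rw [← Ring.multichoose_eq, eq_div_iff (by positivity), mul_comm, ← nsmul_eq_mul,
    Ring.factorial_nsmul_multichoose_eq_ascPochhammer, Polynomial.ascPochhammer_smeval_cast,
    Polynomial.ascPochhammer_smeval_eq_eval]

lemma Real.hasSum_ascPochhammer_div_factorial_mul_pow {a t : ℝ} (ht : |t| < 1) :
    HasSum (fun n => (ascPochhammer ℝ n).eval a / n.factorial * t ^ n) ((1 - t) ^ (-a)) := by
  have h := (Real.one_div_one_sub_rpow_hasFPowerSeriesOnBall_zero a).hasSum
    (y := t) (by simpa [enorm_eq_nnnorm, ← NNReal.coe_lt_coe] using ht)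
  rw [zero_add, one_div, ← Real.rpow_neg (by linarith [le_abs_self t])] at h
  simpa [FormalMultilinearSeries.ofScalars_apply_eq, Ring.choose_add_natCast_sub_one,
    mul_comm] using h

lemma Real.Gamma_add_nat {x : ℝ} (hx : 0 < x) (n : ℕ) :
    Real.Gamma (x + n) = Real.Gamma x * (ascPochhammer ℝ n).eval x := by
  induction n with
  | zero => simp
  | succ n ih =>
    rw [Nat.cast_succ, ← add_assoc, Real.Gamma_add_one (by positivity), ih,
      ascPochhammer_succ_right]
    simp only [Polynomial.eval_mul, Polynomial.eval_add, Polynomial.eval_X,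
      Polynomial.eval_natCast]
    ring

lemma lintegral_rpow_mul_one_sub_rpow {u v : ℝ} (hu : 0 < u) (hv : 0 < v) :
    ∫⁻ t in Ioo 0 1, ENNReal.ofReal (t ^ (u - 1) * (1 - t) ^ (v - 1)) =
      ENNReal.ofReal (beta u v) := by
  have hB := beta_pos hu hv
  have h := lintegral_betaPDF_eq_one hu hv
  rw [lintegral_betaPDF] at h
  simp_rw [mul_assoc, ENNReal.ofReal_mul (one_div_pos.2 hB).le] at h
  rw [lintegral_const_mul' _ _ ENNReal.ofReal_ne_top] at h
  calc _ = ENNReal.ofReal (beta u v * (1 / beta u v)) *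
        ∫⁻ t in Ioo 0 1, ENNReal.ofReal (t ^ (u - 1) * (1 - t) ^ (v - 1)) := by
        rw [mul_one_div_cancel hB.ne', ENNReal.ofReal_one, one_mul]
    _ = _ := by rw [ENNReal.ofReal_mul hB.le, mul_assoc, h, mul_one]

lemma hasSum_of_tsum_ofReal_eq {f : ℕ → ℝ} {L : ℝ} (hf : ∀ n, 0 ≤ f n) (hL : 0 ≤ L)
    (h : ∑' n, ENNReal.ofReal (f n) = ENNReal.ofReal L) : HasSum f L := by
  have hs : Summable f :=
    (ENNReal.summable_toReal (h ▸ ENNReal.ofReal_ne_top)).congr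
      fun n => ENNReal.toReal_ofReal (hf n)
  rwa [← ENNReal.ofReal_tsum_of_nonneg hf hs, ENNReal.ofReal_eq_ofReal_iff
    (tsum_nonneg hf) hL, ← hs.hasSum_iff] at h

section Gauss

variable {a b c : ℝ}

lemma ordinaryHypergeometricCoefficient_pos (ha : 0 < a) (hb : 0 < b) (hc : 0 < c) (n : ℕ) :
    0 < ordinaryHypergeometricCoefficient a b c n := by
  have := ascPochhammer_pos n a ha
  have := ascPochhammer_pos n b hb
  have := ascPochhammer_pos n c hc
  unfold ordinaryHypergeometricCoefficient
  positivity

lemma ascPochhammer_div_factorial_mul_beta (hb : 0 < b) (hc : 0 < c) (n : ℕ) :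
    (ascPochhammer ℝ n).eval a / n.factorial * beta (b + n) (c - b) =
      ordinaryHypergeometricCoefficient a b c n * beta b (c - b) := by
  have := (ascPochhammer_pos n c hc).ne'
  have := (Real.Gamma_pos_of_pos hc).ne'
  rw [beta, beta, show b + n + (c - b) = c + n by ring, Real.Gamma_add_nat hb,
    Real.Gamma_add_nat hc, show b + (c - b) = c by ring]
  field_simp

lemma lintegral_ascPochhammer_mul_rpow_mul_one_sub_rpow (ha : 0 < a) (hb : 0 < b) (hbc : b < c)
    (n : ℕ) :
    ∫⁻ t in Ioo 0 1, ENNReal.ofReal ((ascPochhammer ℝ n).eval a / n.factorial *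
        (t ^ (b + n - 1) * (1 - t) ^ (c - b - 1))) =
      ENNReal.ofReal (ordinaryHypergeometricCoefficient a b c n * beta b (c - b)) := by
  have := ascPochhammer_pos n a ha
  simp_rw [ENNReal.ofReal_mul (by positivity : 0 ≤ (ascPochhammer ℝ n).eval a / n.factorial)]
  rw [lintegral_const_mul' _ _ ENNReal.ofReal_ne_top,
    lintegral_rpow_mul_one_sub_rpow (by positivity) (by linarith),
    ← ENNReal.ofReal_mul (by positivity), ascPochhammer_div_factorial_mul_beta hb (by linarith)]

lemma hasSum_ascPochhammer_mul_rpow_mul_one_sub_rpow {t : ℝ} (ht : t ∈ Ioo 0 1) :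
    HasSum (fun n : ℕ => (ascPochhammer ℝ n).eval a / n.factorial *
        (t ^ (b + n - 1) * (1 - t) ^ (c - b - 1)))
      (t ^ (b - 1) * (1 - t) ^ (c - a - b - 1)) := by
  have h := (Real.hasSum_ascPochhammer_div_factorial_mul_pow (a := a)
    (abs_lt.2 ⟨by linarith [ht.1], ht.2⟩)).mul_left (t ^ (b - 1) * (1 - t) ^ (c - b - 1))
  rw [show c - a - b - 1 = (c - b - 1) + -a by ring, Real.rpow_add (by linarith [ht.2]),
    ← mul_assoc]
  refine h.congr_fun fun n => ?_
  rw [show b + n - 1 = (b - 1) + n by ring, Real.rpow_add_natCast ht.1.ne']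
  ring

-- In `ℝ≥0∞` monotone convergence swaps sum and integral without any summability input;
-- the summability of the coefficients is then read off from the finiteness of the result.
theorem tsum_ofReal_ordinaryHypergeometricCoefficient_mul_beta (ha : 0 < a) (hb : 0 < b)
    (hab : a + b < c) :
    ∑' n, ENNReal.ofReal (ordinaryHypergeometricCoefficient a b c n * beta b (c - b)) =
      ENNReal.ofReal (beta b (c - a - b)) :=
  calc _ = ∑' n, ∫⁻ t in Ioo 0 1, ENNReal.ofReal ((ascPochhammer ℝ n).eval a / n.factorial *
        (t ^ (b + n - 1) * (1 - t) ^ (c - b - 1))) := by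
        simp_rw [lintegral_ascPochhammer_mul_rpow_mul_one_sub_rpow ha hb (by linarith)]
    _ = ∫⁻ t in Ioo 0 1, ∑' n : ℕ, ENNReal.ofReal ((ascPochhammer ℝ n).eval a /
        n.factorial * (t ^ (b + n - 1) * (1 - t) ^ (c - b - 1))) :=
      (lintegral_tsum fun n => by fun_prop).symm
    _ = ∫⁻ t in Ioo 0 1, ENNReal.ofReal (t ^ (b - 1) * (1 - t) ^ (c - a - b - 1)) :=
      setLIntegral_congr_fun measurableSet_Ioo fun t ht => by
        have h := hasSum_ascPochhammer_mul_rpow_mul_one_sub_rpow (a := a) (b := b) (c := c) ht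
        rw [← ENNReal.ofReal_tsum_of_nonneg (fun n => ?_) h.summable, h.tsum_eq]
        have := ascPochhammer_pos n a ha
        have := ht.1
        have : 0 < 1 - t := by linarith [ht.2]
        positivity
    _ = _ := lintegral_rpow_mul_one_sub_rpow hb (by linarith)

theorem hasSum_ordinaryHypergeometricCoefficient (ha : 0 < a) (hb : 0 < b) (hab : a + b < c) :
    HasSum (ordinaryHypergeometricCoefficient a b c)
      (Real.Gamma c * Real.Gamma (c - a - b) / (Real.Gamma (c - a) * Real.Gamma (c - b))) := by
  have hc : 0 < c := by linarith
  have hB := beta_pos hb (by linarith : 0 < c - b)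
  have hS := (hasSum_of_tsum_ofReal_eq
    (fun n => (mul_pos (ordinaryHypergeometricCoefficient_pos ha hb hc n) hB).le)
    (beta_pos hb (by linarith)).le
    (tsum_ofReal_ordinaryHypergeometricCoefficient_mul_beta ha hb hab)).div_const (beta b (c - b))
  simp only [mul_div_cancel_right₀ _ hB.ne'] at hS
  have hΓ : Real.Gamma c * Real.Gamma (c - a - b) / (Real.Gamma (c - a) * Real.Gamma (c - b)) =
      beta b (c - a - b) / beta b (c - b) := by
    have := (Real.Gamma_pos_of_pos hc).ne'
    have := (Real.Gamma_pos_of_pos hb).ne'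
    have := (Real.Gamma_pos_of_pos (by linarith : 0 < c - b)).ne'
    have := (Real.Gamma_pos_of_pos (by linarith : 0 < c - a)).ne'
    rw [beta, beta, show b + (c - a - b) = c - a by ring, show b + (c - b) = c by ring]
    field_simp
  rw [hΓ]
  exact hS

end Gauss

lemma tendsto_ofReal_nhdsWithin_Ioo :
    Tendsto (fun x : ℝ => (x : ℂ)) (𝓝[Ioo 0 1] 1) (𝓝 1) :=
  (continuous_ofReal.tendsto' 1 1 ofReal_one).mono_left nhdsWithin_le_nhds

lemma tendsto_one_sub_ofReal_nhdsWithin_Ioo :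
    Tendsto (fun x : ℝ => 1 - (x : ℂ)) (𝓝[Ioo 0 1] 1) (𝓝 0) :=
  sub_self (1 : ℂ) ▸ tendsto_const_nhds.sub tendsto_ofReal_nhdsWithin_Ioo

lemma tendsto_cpow_nhdsWithin_Ioo (p : ℂ) :
    Tendsto (fun x : ℝ => (x : ℂ) ^ p) (𝓝[Ioo 0 1] 1) (𝓝 1) :=
  one_cpow p ▸ (continuousAt_cpow_const (by simp)).tendsto.comp tendsto_ofReal_nhdsWithin_Ioo

lemma cpow_sq_mul_cpow {z : ℂ} (hz : z ≠ 0) (p q : ℂ) : (z ^ p) ^ 2 * z ^ q = z ^ (2 * p + q) := by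
  rw [sq, ← cpow_add _ _ hz, ← cpow_add _ _ hz, two_mul]

lemma norm_ofReal_lt_one {x : ℝ} (hx : x ∈ Ioo 0 1) : ‖(x : ℂ)‖ < 1 := by
  rw [norm_real, Real.norm_of_nonneg hx.1.le]
  exact hx.2

lemma one_sub_ofReal_mem_slitPlane {x : ℝ} (hx : x < 1) : 1 - (x : ℂ) ∈ slitPlane := by
  rw [← ofReal_one, ← ofReal_sub]; exact ofReal_mem_slitPlane.2 (by linarith)

lemma natCast_mul_pow_sub_one_mul_one_sub_le_one {x : ℝ} (h0 : 0 ≤ x) (h1 : x ≤ 1) (n : ℕ) :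
    n * x ^ (n - 1) * (1 - x) ≤ 1 :=
  calc n * x ^ (n - 1) * (1 - x) = ∑ _i ∈ Finset.range n, x ^ (n - 1) * (1 - x) := by simp; ring
    _ ≤ ∑ i ∈ Finset.range n, x ^ i * (1 - x) := Finset.sum_le_sum fun i hi =>
        mul_le_mul_of_nonneg_right (pow_le_pow_of_le_one h0 h1 (by simp at hi; omega))
          (by linarith)
    _ = 1 - x ^ n := by rw [← Finset.sum_mul, geom_sum_mul_neg]
    _ ≤ 1 := by linarith [pow_nonneg h0 n]

lemma natCast_mul_pow_sub_one_eq_div {r : ℝ} (hr : 0 < r) (n : ℕ) :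
    n * r ^ (n - 1) = n * r ^ n / r := by
  cases n with
  | zero => simp
  | succ n => field_simp; rw [Nat.add_sub_cancel, pow_succ]

lemma hasDerivAt_tsum_mul_pow {c : ℕ → ℂ} {M : ℝ} (hc : ∀ n, ‖c n‖ ≤ M) {z : ℂ}
    (hz : ‖z‖ < 1) :
    HasDerivAt (fun w => ∑' n, c n * w ^ n) (∑' n, c n * (n * z ^ (n - 1))) z := by
  obtain ⟨r, hzr, hr1⟩ := exists_between hz
  have hr0 : 0 < r := (norm_nonneg z).trans_lt hzr
  have hsum : Summable fun n : ℕ => M * (n * r ^ (n - 1)) := by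
    simp_rw [natCast_mul_pow_sub_one_eq_div hr0]
    simpa only [pow_one] using ((summable_pow_mul_geometric_of_norm_lt_one 1
      (by rwa [Real.norm_of_nonneg hr0.le] : ‖r‖ < 1)).div_const r).mul_left M
  refine hasDerivAt_tsum_of_isPreconnected hsum Metric.isOpen_ball
    (convex_ball 0 r).isPreconnected (fun n w _ => (hasDerivAt_pow n w).const_mul (c n))
    (fun n w hw => ?_) (Metric.mem_ball_self hr0) ?_ (by simpa using hzr)
  · rw [mem_ball_zero_iff] at hw
    rw [norm_mul, norm_mul, norm_pow, norm_natCast]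
    exact mul_le_mul (hc n) (by gcongr) (by positivity) ((norm_nonneg _).trans (hc 0))
  · exact summable_of_ne_finset_zero (s := {0}) fun n hn => by
      simp [zero_pow (by simpa using hn : n ≠ 0)]

lemma tendsto_tsum_mul_pow_nhdsWithin_Ioo {c : ℕ → ℂ} {l : ℂ} (h : HasSum c l) :
    Tendsto (fun x : ℝ => ∑' n, c n * (x : ℂ) ^ n) (𝓝[Ioo 0 1] 1) (𝓝 l) :=
  (tendsto_map'_iff.mp (Complex.tendsto_tsum_powerSeries_nhdsWithin_lt h.tendsto_sum_nat)).mono_left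
    (nhdsWithin_mono _ Ioo_subset_Iio_self)

lemma tendsto_one_sub_mul_tsum_mul_pow_deriv {c : ℕ → ℂ} (hc : Summable fun n => ‖c n‖) :
    Tendsto (fun x : ℝ => (1 - (x : ℂ)) * ∑' n, c n * (n * (x : ℂ) ^ (n - 1)))
      (𝓝[Ioo 0 1] 1) (𝓝 0) := by
  simp_rw [← tsum_mul_left]
  rw [show (0 : ℂ) = ∑' _ : ℕ, 0 from tsum_zero.symm]
  refine tendsto_tsum_of_dominated_convergence hc (fun n => ?_) ?_
  · simpa using tendsto_one_sub_ofReal_nhdsWithin_Ioo.mul ((tendsto_const_nhds (x := c n)).mul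
      ((tendsto_const_nhds (x := (n : ℂ))).mul (tendsto_ofReal_nhdsWithin_Ioo.pow (n - 1))))
  · filter_upwards [self_mem_nhdsWithin] with x hx n
    have h1x : ‖1 - (x : ℂ)‖ = 1 - x := by
      rw [← ofReal_one, ← ofReal_sub, norm_real, Real.norm_of_nonneg (by linarith [hx.2])]
    rw [norm_mul, norm_mul, norm_mul, norm_pow, norm_natCast, h1x, norm_real,
      Real.norm_of_nonneg hx.1.le]
    calc (1 - x) * (‖c n‖ * (n * x ^ (n - 1))) = ‖c n‖ * (n * x ^ (n - 1) * (1 - x)) := by ring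
      _ ≤ ‖c n‖ * 1 := by
        gcongr; exact natCast_mul_pow_sub_one_mul_one_sub_le_one hx.1.le hx.2.le n
      _ = ‖c n‖ := mul_one _

section Boundary

variable {g s θ : ℂ} {F F' : ℂ → ℂ}

lemma hasDerivAt_cpow_mul_one_sub_cpow_mul {x : ℝ} (hx : x ∈ Ioo 0 1)
    (hF : HasDerivAt F (F' x) x) :
    HasDerivAt (fun z => z ^ g * (1 - z) ^ s * F z)
      (x ^ g * (1 - x) ^ s * (g * (x : ℂ)⁻¹ * F x - s * (1 - (x : ℂ))⁻¹ * F x + F' x)) x := by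
  have hx0 : (x : ℂ) ≠ 0 := ofReal_ne_zero.2 hx.1.ne'
  have hx1 : 1 - (x : ℂ) ≠ 0 := slitPlane_ne_zero (one_sub_ofReal_mem_slitPlane hx.2)
  refine (((hasDerivAt_id (x : ℂ)).cpow_const (ofReal_mem_slitPlane.2 hx.1)).mul
    (((hasDerivAt_id (x : ℂ)).const_sub 1).cpow_const (one_sub_ofReal_mem_slitPlane hx.2))).mul hF
    |>.congr_deriv ?_
  simp only [id, Pi.mul_apply]
  rw [cpow_sub _ _ hx0, cpow_sub _ _ hx1, cpow_one, cpow_one]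
  field_simp
  ring

lemma cpow_mul_one_sub_cpow_mul_sq_mul_one_sub_cpow {x : ℝ} (hx : x ∈ Ioo 0 1) (r : ℂ) :
    ((x : ℂ) ^ g * (1 - (x : ℂ)) ^ s * F x) ^ 2 * (1 - (x : ℂ)) ^ r =
      ((x : ℂ) ^ g) ^ 2 * F x ^ 2 * (1 - (x : ℂ)) ^ (2 * s + r) := by
  rw [← cpow_sq_mul_cpow (slitPlane_ne_zero (one_sub_ofReal_mem_slitPlane hx.2))]
  ring

lemma tendsto_cpow_mul_one_sub_cpow_mul_sq
    (hθ : Tendsto (fun x : ℝ => F x) (𝓝[Ioo 0 1] 1) (𝓝 θ)) :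
    Tendsto (fun x : ℝ => ((x : ℂ) ^ g * (1 - (x : ℂ)) ^ s * F x) ^ 2 *
      (1 - (x : ℂ)) ^ (-(2 * s))) (𝓝[Ioo 0 1] 1) (𝓝 (θ ^ 2)) := by
  have h := ((tendsto_cpow_nhdsWithin_Ioo g).pow 2).mul (hθ.pow 2)
  rw [one_pow, one_mul] at h
  refine h.congr' (eventually_mem_nhdsWithin.mono fun x hx => ?_)
  dsimp only
  rw [cpow_mul_one_sub_cpow_mul_sq_mul_one_sub_cpow hx, add_neg_cancel, cpow_zero, mul_one]

lemma yfun0_cpow_mul_one_sub_cpow_mul {x : ℝ} (hx : x ∈ Ioo 0 1) (hF : HasDerivAt F (F' x) x) :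
    yfun0 (fun z => z ^ g * (1 - z) ^ s * F z) x * (1 - (x : ℂ)) ^ (1 - 2 * s) =
      ((x : ℂ) ^ g) ^ 2 * F x *
        (g * (1 - x) * (x : ℂ)⁻¹ * F x - s * F x + (1 - x) * F' x) := by
  have hx1 : 1 - (x : ℂ) ≠ 0 := slitPlane_ne_zero (one_sub_ofReal_mem_slitPlane hx.2)
  have hpow := cpow_sq_mul_cpow hx1 s (1 - 2 * s)
  rw [show 2 * s + (1 - 2 * s) = 1 by ring, cpow_one] at hpow
  rw [yfun0, (hasDerivAt_cpow_mul_one_sub_cpow_mul hx hF).deriv]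
  linear_combination ((x : ℂ) ^ g) ^ 2 * F x *
    (g * (x : ℂ)⁻¹ * F x - s * (1 - (x : ℂ))⁻¹ * F x + F' x) * hpow -
    s * ((x : ℂ) ^ g) ^ 2 * F x ^ 2 * mul_inv_cancel₀ hx1

lemma tendsto_yfun0_cpow_mul_one_sub_cpow_mul (hF : ∀ x ∈ Ioo (0 : ℝ) 1, HasDerivAt F (F' x) x)
    (hθ : Tendsto (fun x : ℝ => F x) (𝓝[Ioo 0 1] 1) (𝓝 θ))
    (hF' : Tendsto (fun x : ℝ => (1 - (x : ℂ)) * F' x) (𝓝[Ioo 0 1] 1) (𝓝 0)) :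
    Tendsto (fun x : ℝ => yfun0 (fun z => z ^ g * (1 - z) ^ s * F z) x *
      (1 - (x : ℂ)) ^ (1 - 2 * s)) (𝓝[Ioo 0 1] 1) (𝓝 (-(s * θ ^ 2))) := by
  have hX := tendsto_ofReal_nhdsWithin_Ioo
  have h := (((tendsto_cpow_nhdsWithin_Ioo g).pow 2).mul hθ).mul
    (((((tendsto_const_nhds (x := g)).mul tendsto_one_sub_ofReal_nhdsWithin_Ioo).mul
      (hX.inv₀ one_ne_zero)).mul hθ).sub ((tendsto_const_nhds (x := s)).mul hθ) |>.add hF')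
  refine Tendsto.congr' (eventually_mem_nhdsWithin.mono fun x hx =>
    (yfun0_cpow_mul_one_sub_cpow_mul hx (hF x hx)).symm) ?_
  convert h using 2
  ring

lemma cpow_mul_one_sub_cpow_mul_sq_mul_one_sub_cpow_one_sub {x : ℝ} (hx : x ∈ Ioo 0 1) :
    ((x : ℂ) ^ g * (1 - (x : ℂ)) ^ s * F x) ^ 2 * (1 - (x : ℂ)) ^ (1 - 2 * s) =
      ((x : ℂ) ^ g) ^ 2 * F x ^ 2 * (1 - x) := by
  rw [cpow_mul_one_sub_cpow_mul_sq_mul_one_sub_cpow hx, add_sub_cancel, cpow_one]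

lemma tendsto_yfun1_cpow_mul_one_sub_cpow_mul (hF : ∀ x ∈ Ioo (0 : ℝ) 1, HasDerivAt F (F' x) x)
    (hθ : Tendsto (fun x : ℝ => F x) (𝓝[Ioo 0 1] 1) (𝓝 θ))
    (hF' : Tendsto (fun x : ℝ => (1 - (x : ℂ)) * F' x) (𝓝[Ioo 0 1] 1) (𝓝 0)) :
    Tendsto (fun x : ℝ => yfun1 (fun z => z ^ g * (1 - z) ^ s * F z) x *
      (1 - (x : ℂ)) ^ (1 - 2 * s)) (𝓝[Ioo 0 1] 1) (𝓝 (-(s * θ ^ 2))) := by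
  have h := (tendsto_yfun0_cpow_mul_one_sub_cpow_mul (g := g) (s := s) hF hθ hF').sub
    ((((tendsto_cpow_nhdsWithin_Ioo g).pow 2).mul (hθ.pow 2)).mul
      tendsto_one_sub_ofReal_nhdsWithin_Ioo |>.div tendsto_ofReal_nhdsWithin_Ioo one_ne_zero)
  rw [mul_zero, zero_div, sub_zero] at h
  refine h.congr' (eventually_mem_nhdsWithin.mono fun x hx => ?_)
  simp only [yfun0, yfun1, Pi.div_apply]
  linear_combination (x : ℂ)⁻¹ * cpow_mul_one_sub_cpow_mul_sq_mul_one_sub_cpow_one_sub hx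

lemma tendsto_yfun2_cpow_mul_one_sub_cpow_mul (hF : ∀ x ∈ Ioo (0 : ℝ) 1, HasDerivAt F (F' x) x)
    (hθ : Tendsto (fun x : ℝ => F x) (𝓝[Ioo 0 1] 1) (𝓝 θ))
    (hF' : Tendsto (fun x : ℝ => (1 - (x : ℂ)) * F' x) (𝓝[Ioo 0 1] 1) (𝓝 0)) :
    Tendsto (fun x : ℝ => yfun2 (fun z => z ^ g * (1 - z) ^ s * F z) x *
      (1 - (x : ℂ)) ^ (1 - 2 * s)) (𝓝[Ioo 0 1] 1) (𝓝 ((1 - s) * θ ^ 2)) := by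
  have h := (tendsto_yfun0_cpow_mul_one_sub_cpow_mul (g := g) (s := s) hF hθ hF').add
    (((tendsto_cpow_nhdsWithin_Ioo g).pow 2).mul (hθ.pow 2))
  rw [one_pow, one_mul, neg_add_eq_sub, ← one_sub_mul] at h
  refine h.congr' (eventually_mem_nhdsWithin.mono fun x hx => ?_)
  have hx1 : (x : ℂ) - 1 ≠ 0 := sub_ne_zero.2 (ofReal_ne_one.2 hx.2.ne)
  simp only [yfun0, yfun2]
  linear_combination ((x : ℂ) - 1)⁻¹ * cpow_mul_one_sub_cpow_mul_sq_mul_one_sub_cpow_one_sub hx -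
    ((x : ℂ) ^ g) ^ 2 * F x ^ 2 * mul_inv_cancel₀ hx1

end Boundary

lemma eval_ascPochhammer_ofReal (p : ℝ) (n : ℕ) :
    (ascPochhammer ℂ n).eval (p : ℂ) = (((ascPochhammer ℝ n).eval p : ℝ) : ℂ) := by
  rw [← ascPochhammer_map (algebraMap ℝ ℂ), Polynomial.eval_map]
  exact Polynomial.eval₂_at_apply _ p

lemma hyp2F1_ofReal (a b c : ℝ) (z : ℂ) :
    hyp2F1 a b c z = ∑' n, ((ordinaryHypergeometricCoefficient a b c n : ℝ) : ℂ) * z ^ n :=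
  tsum_congr fun n => by
    push_cast
    simp only [eval_ascPochhammer_ofReal]
    ring

section Hypergeometric

variable {a b c : ℝ}

lemma summable_norm_ordinaryHypergeometricCoefficient (ha : 0 < a) (hb : 0 < b)
    (hab : a + b < c) :
    Summable fun n => ‖((ordinaryHypergeometricCoefficient a b c n : ℝ) : ℂ)‖ :=
  (hasSum_ordinaryHypergeometricCoefficient ha hb hab).summable.congr fun n => by
    rw [norm_real, Real.norm_of_nonneg
      (ordinaryHypergeometricCoefficient_pos ha hb (by linarith) n).le]

lemma hasDerivAt_hyp2F1 (ha : 0 < a) (hb : 0 < b) (hab : a + b < c) {z : ℂ} (hz : ‖z‖ < 1) :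
    HasDerivAt (hyp2F1 a b c)
      (∑' n, ((ordinaryHypergeometricCoefficient a b c n : ℝ) : ℂ) * (n * z ^ (n - 1))) z := by
  have h := summable_norm_ordinaryHypergeometricCoefficient ha hb hab
  rw [show hyp2F1 a b c = _ from funext (hyp2F1_ofReal a b c)]
  exact hasDerivAt_tsum_mul_pow (fun n => h.le_tsum n fun j _ => norm_nonneg _) hz

lemma tendsto_hyp2F1_nhdsWithin_Ioo (ha : 0 < a) (hb : 0 < b) (hab : a + b < c) :
    Tendsto (fun x : ℝ => hyp2F1 a b c x) (𝓝[Ioo 0 1] 1)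
      (𝓝 (Gamma c * Gamma (c - a - b) / (Gamma (c - a) * Gamma (c - b)))) := by
  have h := tendsto_tsum_mul_pow_nhdsWithin_Ioo
    (hasSum_ofReal.2 (hasSum_ordinaryHypergeometricCoefficient ha hb hab))
  simp_rw [hyp2F1_ofReal]
  convert h using 2
  simp only [← ofReal_sub, Gamma_ofReal]
  push_cast
  ring

lemma tendsto_one_sub_mul_deriv_hyp2F1 (ha : 0 < a) (hb : 0 < b) (hab : a + b < c) :
    Tendsto (fun x : ℝ => (1 - (x : ℂ)) * deriv (hyp2F1 a b c) x) (𝓝[Ioo 0 1] 1) (𝓝 0) :=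
  (tendsto_one_sub_mul_tsum_mul_pow_deriv
    (summable_norm_ordinaryHypergeometricCoefficient ha hb hab)).congr'
    (eventually_mem_nhdsWithin.mono fun x hx => by
      dsimp only
      rw [(hasDerivAt_hyp2F1 ha hb hab (norm_ofReal_lt_one hx)).deriv])

end Hypergeometric

theorem stmt_6_general (α β γ : ℚ)
    (h0 : 0 < α) (h1 : α < β) (h4 : α + β < γ)
    (θ : ℂ)
    (hθ : θ = Complex.Gamma (γ : ℂ) * Complex.Gamma ((γ : ℂ) - (α : ℂ) - (β : ℂ)) /
        (Complex.Gamma ((γ : ℂ) - (α : ℂ)) * Complex.Gamma ((γ : ℂ) - (β : ℂ)))) :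
    Tendsto (fun x : ℝ => (hypu0 α β γ (x : ℂ)) ^ 2 *
        ((1 : ℂ) - (x : ℂ)) ^ (-(1 + (α : ℂ) + (β : ℂ) - (γ : ℂ))))
      (𝓝[Set.Ioo (0 : ℝ) 1] 1) (𝓝 (θ ^ 2)) ∧
    Tendsto (fun x : ℝ => yfun0 (hypu0 α β γ) (x : ℂ) *
        ((1 : ℂ) - (x : ℂ)) ^ ((γ : ℂ) - (α : ℂ) - (β : ℂ)))
      (𝓝[Set.Ioo (0 : ℝ) 1] 1) (𝓝 (-(θ ^ 2 / 2) * ((α : ℂ) + (β : ℂ) - (γ : ℂ) + 1))) ∧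
    Tendsto (fun x : ℝ => yfun1 (hypu0 α β γ) (x : ℂ) *
        ((1 : ℂ) - (x : ℂ)) ^ ((γ : ℂ) - (α : ℂ) - (β : ℂ)))
      (𝓝[Set.Ioo (0 : ℝ) 1] 1) (𝓝 (-(θ ^ 2 / 2) * ((α : ℂ) + (β : ℂ) - (γ : ℂ) + 1))) ∧
    Tendsto (fun x : ℝ => yfun2 (hypu0 α β γ) (x : ℂ) *
        ((1 : ℂ) - (x : ℂ)) ^ ((γ : ℂ) - (α : ℂ) - (β : ℂ)))
      (𝓝[Set.Ioo (0 : ℝ) 1] 1) (𝓝 (-(θ ^ 2 / 2) * ((α : ℂ) + (β : ℂ) - (γ : ℂ) - 1))) := by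
  have ha : (0 : ℝ) < α := by exact_mod_cast h0
  have hb : (0 : ℝ) < β := by exact_mod_cast h0.trans h1
  have hab : (α : ℝ) + β < γ := by exact_mod_cast h4
  have hF : ∀ x ∈ Ioo (0 : ℝ) 1, HasDerivAt (hyp2F1 α β γ) (deriv (hyp2F1 α β γ) x) x :=
    fun x hx => (hasDerivAt_hyp2F1 ha hb hab (norm_ofReal_lt_one hx)).differentiableAt.hasDerivAt
  have hlim : Tendsto (fun x : ℝ => hyp2F1 α β γ x) (𝓝[Ioo 0 1] 1) (𝓝 θ) :=
    hθ ▸ tendsto_hyp2F1_nhdsWithin_Ioo ha hb hab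
  have hlim' := tendsto_one_sub_mul_deriv_hyp2F1 ha hb hab
  rw [show -(1 + (α : ℂ) + β - γ) = -(2 * ((α + β - γ + 1) / 2)) by ring,
    show (γ : ℂ) - α - β = 1 - 2 * ((α + β - γ + 1) / 2) by ring,
    show -(θ ^ 2 / 2) * ((α : ℂ) + β - γ + 1) = -((α + β - γ + 1) / 2 * θ ^ 2) by ring,
    show -(θ ^ 2 / 2) * ((α : ℂ) + β - γ - 1) = (1 - (α + β - γ + 1) / 2) * θ ^ 2 by ring]
  exact ⟨tendsto_cpow_mul_one_sub_cpow_mul_sq hlim,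
    tendsto_yfun0_cpow_mul_one_sub_cpow_mul hF hlim hlim',
    tendsto_yfun1_cpow_mul_one_sub_cpow_mul hF hlim hlim',
    tendsto_yfun2_cpow_mul_one_sub_cpow_mul hF hlim hlim'⟩

/-- with `θ = Γ(γ)Γ(γ−α−β)/(Γ(γ−α)Γ(γ−β))`, as the real variable `x` tends to `1`
from the left within `(0,1)`, one has `u₀(x)² (1−x)^{−(1+α+β−γ)} → θ²`,
`y₀(x) (1−x)^{γ−α−β} → −(θ²/2)(α+β−γ+1)`, `y₁(x) (1−x)^{γ−α−β} → −(θ²/2)(α+β−γ+1)`, and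
`y₂(x) (1−x)^{γ−α−β} → −(θ²/2)(α+β−γ−1)`. -/
theorem stmt_6 (α β γ : ℚ)
    (hα : ∃ n : ℕ, 0 < n ∧ α = 1 / n) (hβ : ∃ n : ℕ, 0 < n ∧ β = 1 / n)
    (hγ : ∃ n : ℕ, 0 < n ∧ γ = 1 / n)
    (h0 : 0 < α) (h1 : α < β) (h2 : β < γ) (h3 : γ < 1) (h4 : α + β < γ)
    (θ : ℂ)
    (hθ : θ = Complex.Gamma (γ : ℂ) * Complex.Gamma ((γ : ℂ) - (α : ℂ) - (β : ℂ)) /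
        (Complex.Gamma ((γ : ℂ) - (α : ℂ)) * Complex.Gamma ((γ : ℂ) - (β : ℂ)))) :
    Tendsto (fun x : ℝ => (hypu0 α β γ (x : ℂ)) ^ 2 *
        ((1 : ℂ) - (x : ℂ)) ^ (-(1 + (α : ℂ) + (β : ℂ) - (γ : ℂ))))
      (𝓝[Set.Ioo (0 : ℝ) 1] 1) (𝓝 (θ ^ 2)) ∧
    Tendsto (fun x : ℝ => yfun0 (hypu0 α β γ) (x : ℂ) *
        ((1 : ℂ) - (x : ℂ)) ^ ((γ : ℂ) - (α : ℂ) - (β : ℂ)))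
      (𝓝[Set.Ioo (0 : ℝ) 1] 1) (𝓝 (-(θ ^ 2 / 2) * ((α : ℂ) + (β : ℂ) - (γ : ℂ) + 1))) ∧
    Tendsto (fun x : ℝ => yfun1 (hypu0 α β γ) (x : ℂ) *
        ((1 : ℂ) - (x : ℂ)) ^ ((γ : ℂ) - (α : ℂ) - (β : ℂ)))
      (𝓝[Set.Ioo (0 : ℝ) 1] 1) (𝓝 (-(θ ^ 2 / 2) * ((α : ℂ) + (β : ℂ) - (γ : ℂ) + 1))) ∧
    Tendsto (fun x : ℝ => yfun2 (hypu0 α β γ) (x : ℂ) *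
        ((1 : ℂ) - (x : ℂ)) ^ ((γ : ℂ) - (α : ℂ) - (β : ℂ)))
      (𝓝[Set.Ioo (0 : ℝ) 1] 1) (𝓝 (-(θ ^ 2 / 2) * ((α : ℂ) + (β : ℂ) - (γ : ℂ) - 1))) :=
  stmt_6_general α β γ h0 h1 h4 θ hθ
end

section
/- Let I be a prime ideal of the polynomial ring ℂ[Y₀,Y₁,Y₂] which is not principal. Then I contains a nonzero polynomial that is homogeneous with respect to total degree. -/
/-!
Write `w(p)` for the difference between the largest and the smallest degree of the nonzero
homogeneous components of `p`. If `p, q ≠ 0` and `w(p) ≤ w(q)`, then cancelling the top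
homogeneous components, `r = top(p) * q - top(q) * p`, gives `r = 0` or `w(r) < w(q)`. This
Euclidean algorithm shows that an element `p ≠ 0` of `I` of minimal width divides every `q ∈ I`
up to a nonzero homogeneous factor: `s * q ∈ (p)`. Since `w` is additive, a prime factor `f ∈ I`
of `p` also has minimal width. If `I` contained no nonzero homogeneous element, `f` could never
divide the factor `s`, so `f ∣ q` for all `q ∈ I`, and `I = (f)` would be principal.
-/

open MvPolynomial

open UniqueFactorizationMonoid in
theorem Ideal.IsPrime.exists_prime_dvd_mem {R : Type*} [CommSemiring R]
    [UniqueFactorizationMonoid R] {I : Ideal R} (hI : I.IsPrime) {a : R} (haI : a ∈ I)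
    (ha : a ≠ 0) : ∃ f ∈ I, Prime f ∧ f ∣ a := by
  obtain ⟨u, hu⟩ := factors_prod ha
  rw [← hu, Ideal.mul_unit_mem_iff_mem _ u.isUnit] at haI
  obtain ⟨f, hf, hfI⟩ := (hI.multiset_prod_mem_iff_exists_mem _).1 haI
  exact ⟨f, hfI, prime_of_factor f hf, dvd_of_mem_factors hf⟩

namespace Polynomial

variable {A : Type*} [CommRing A] [NoZeroDivisors A] {p q : A[X]}

theorem natDegree_sub_natTrailingDegree_mul (hp : p ≠ 0) (hq : q ≠ 0) :
    (p * q).natDegree - (p * q).natTrailingDegree =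
      (p.natDegree - p.natTrailingDegree) + (q.natDegree - q.natTrailingDegree) := by
  rw [natDegree_mul hp hq, natTrailingDegree_mul hp hq]
  have := natTrailingDegree_le_natDegree p
  have := natTrailingDegree_le_natDegree q
  omega

theorem natDegree_sub_natTrailingDegree_cancel_leading_lt (hp : p ≠ 0) (hq : q ≠ 0)
    (hpq : p.natDegree - p.natTrailingDegree ≤ q.natDegree - q.natTrailingDegree)
    (hr : monomial p.natDegree p.leadingCoeff * q - monomial q.natDegree q.leadingCoeff * p ≠ 0) :
    (monomial p.natDegree p.leadingCoeff * q - monomial q.natDegree q.leadingCoeff * p).natDegree -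
        (monomial p.natDegree p.leadingCoeff * q -
          monomial q.natDegree q.leadingCoeff * p).natTrailingDegree <
      q.natDegree - q.natTrailingDegree := by
  set a := monomial p.natDegree p.leadingCoeff * q
  set b := monomial q.natDegree q.leadingCoeff * p
  have hmp : monomial p.natDegree p.leadingCoeff ≠ 0 := by simpa using hp
  have hmq : monomial q.natDegree q.leadingCoeff ≠ 0 := by simpa using hq
  have ha : a ≠ 0 := mul_ne_zero hmp hq
  have hdeg_a : a.natDegree = p.natDegree + q.natDegree := by
    rw [natDegree_mul hmp hq, natDegree_monomial_eq _ (by simpa using hp)]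
  have hdeg_b : b.natDegree = p.natDegree + q.natDegree := by
    rw [natDegree_mul hmq hp, natDegree_monomial_eq _ (by simpa using hq), add_comm]
  have htrail_a : a.natTrailingDegree = p.natDegree + q.natTrailingDegree := by
    rw [natTrailingDegree_mul hmp hq, natTrailingDegree_monomial (by simpa using hp)]
  have htrail_b : b.natTrailingDegree = q.natDegree + p.natTrailingDegree := by
    rw [natTrailingDegree_mul hmq hp, natTrailingDegree_monomial (by simpa using hq)]
  have hdeg : (a - b).natDegree < p.natDegree + q.natDegree := by
    refine hdeg_a ▸ natDegree_lt_natDegree hr (degree_sub_lt_left ?_ ha ?_)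
    · rw [degree_eq_natDegree ha, degree_eq_natDegree (mul_ne_zero hmq hp), hdeg_a, hdeg_b]
    · simp only [a, b, leadingCoeff_mul, leadingCoeff_monomial, mul_comm]
  have htrail : min (p.natDegree + q.natTrailingDegree) (q.natDegree + p.natTrailingDegree) ≤
      (a - b).natTrailingDegree := by
    refine le_natTrailingDegree hr fun m hm => ?_
    rw [coeff_sub, coeff_eq_zero_of_lt_natTrailingDegree (by omega),
      coeff_eq_zero_of_lt_natTrailingDegree (by omega), sub_zero]
  have := natTrailingDegree_le_natDegree p
  have := natTrailingDegree_le_natDegree q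
  have := natTrailingDegree_le_natDegree (a - b)
  omega

end Polynomial

namespace MvPolynomial

variable {σ R : Type*} [CommRing R]

/-- `p ↦ p(t • Y) = ∑ₙ pₙ tⁿ`, where `pₙ` is the homogeneous component of degree `n`. -/
noncomputable def homogeneousExpansion :
    MvPolynomial σ R →ₐ[R] Polynomial (MvPolynomial σ R) :=
  aeval fun i => Polynomial.monomial 1 (X i)

theorem homogeneousExpansion_monomial (u : σ →₀ ℕ) (c : R) :
    homogeneousExpansion (monomial u c) = Polynomial.monomial u.degree (monomial u c) := by
  classical
  simp only [homogeneousExpansion, aeval_monomial, ← Polynomial.C_mul_X_pow_eq_monomial,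
    pow_one, mul_pow, Finsupp.prod, Finset.prod_mul_distrib, ← map_pow, ← map_prod,
    Finset.prod_pow_eq_pow_sum, Polynomial.algebraMap_apply, ← mul_assoc, ← map_mul]
  rw [Finsupp.degree, monomial_eq, Finsupp.prod]
  rfl

theorem coeff_homogeneousExpansion (p : MvPolynomial σ R) (n : ℕ) :
    (homogeneousExpansion p).coeff n = homogeneousComponent n p := by
  induction p using MvPolynomial.induction_on' with
  | monomial u c =>
    rw [homogeneousExpansion_monomial, Polynomial.coeff_monomial,
      homogeneousComponent_of_mem (isHomogeneous_monomial c rfl)]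
    grind
  | add p q hp hq => rw [map_add, Polynomial.coeff_add, hp, hq, map_add]

theorem homogeneousExpansion_injective :
    Function.Injective (homogeneousExpansion (σ := σ) (R := R)) := by
  intro p q h
  ext d
  have := congr(coeff d (($h).coeff d.degree))
  simpa [coeff_homogeneousExpansion, coeff_homogeneousComponent] using this

theorem homogeneousExpansion_eq_zero_iff {p : MvPolynomial σ R} :
    homogeneousExpansion p = 0 ↔ p = 0 :=
  map_eq_zero_iff _ homogeneousExpansion_injective

theorem IsHomogeneous.homogeneousExpansion_eq {p : MvPolynomial σ R} {n : ℕ}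
    (hp : p.IsHomogeneous n) : homogeneousExpansion p = Polynomial.monomial n p := by
  ext m
  rw [coeff_homogeneousExpansion, Polynomial.coeff_monomial, homogeneousComponent_of_mem hp]
  grind

theorem isHomogeneous_leadingCoeff_homogeneousExpansion (p : MvPolynomial σ R) :
    (homogeneousExpansion p).leadingCoeff.IsHomogeneous (homogeneousExpansion p).natDegree := by
  rw [Polynomial.leadingCoeff, coeff_homogeneousExpansion]
  exact homogeneousComponent_isHomogeneous _ p

/-- The largest minus the smallest degree of the nonzero homogeneous components of `p`. -/
noncomputable def degreeWidth (p : MvPolynomial σ R) : ℕ :=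
  (homogeneousExpansion p).natDegree - (homogeneousExpansion p).natTrailingDegree

variable [IsDomain R]

theorem degreeWidth_mul {p q : MvPolynomial σ R} (hp : p ≠ 0) (hq : q ≠ 0) :
    degreeWidth (p * q) = degreeWidth p + degreeWidth q := by
  rw [degreeWidth, map_mul, Polynomial.natDegree_sub_natTrailingDegree_mul
    (homogeneousExpansion_eq_zero_iff.not.2 hp) (homogeneousExpansion_eq_zero_iff.not.2 hq)]
  rfl

theorem degreeWidth_le_of_dvd {p q : MvPolynomial σ R} (hq : q ≠ 0) (hpq : p ∣ q) :
    degreeWidth p ≤ degreeWidth q := by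
  obtain ⟨c, rfl⟩ := hpq
  rw [degreeWidth_mul (left_ne_zero_of_mul hq) (right_ne_zero_of_mul hq)]
  exact Nat.le_add_right _ _

theorem degreeWidth_cancel_leading_lt {p q : MvPolynomial σ R} (hp : p ≠ 0) (hq : q ≠ 0)
    (hpq : degreeWidth p ≤ degreeWidth q)
    (hr : (homogeneousExpansion p).leadingCoeff * q -
      (homogeneousExpansion q).leadingCoeff * p ≠ 0) :
    degreeWidth ((homogeneousExpansion p).leadingCoeff * q -
      (homogeneousExpansion q).leadingCoeff * p) < degreeWidth q := by
  have hexp : homogeneousExpansion ((homogeneousExpansion p).leadingCoeff * q -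
        (homogeneousExpansion q).leadingCoeff * p) =
      Polynomial.monomial (homogeneousExpansion p).natDegree (homogeneousExpansion p).leadingCoeff *
          homogeneousExpansion q -
        Polynomial.monomial (homogeneousExpansion q).natDegree
          (homogeneousExpansion q).leadingCoeff * homogeneousExpansion p := by
    rw [map_sub, map_mul, map_mul,
      (isHomogeneous_leadingCoeff_homogeneousExpansion p).homogeneousExpansion_eq,
      (isHomogeneous_leadingCoeff_homogeneousExpansion q).homogeneousExpansion_eq]
  rw [degreeWidth, hexp]
  exact Polynomial.natDegree_sub_natTrailingDegree_cancel_leading_lt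
    (homogeneousExpansion_eq_zero_iff.not.2 hp) (homogeneousExpansion_eq_zero_iff.not.2 hq) hpq
    (hexp ▸ homogeneousExpansion_eq_zero_iff.not.2 hr)

theorem exists_isHomogeneous_mul_eq_mul_of_degreeWidth_le {I : Ideal (MvPolynomial σ R)}
    {p : MvPolynomial σ R} (hpI : p ∈ I) (hp : p ≠ 0)
    (hmin : ∀ q ∈ I, q ≠ 0 → degreeWidth p ≤ degreeWidth q) {q : MvPolynomial σ R}
    (hqI : q ∈ I) :
    ∃ s u, s ≠ 0 ∧ (∃ n, s.IsHomogeneous n) ∧ s * q = p * u := by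
  induction hw : degreeWidth q using Nat.strong_induction_on generalizing q with
  | _ w ih =>
  by_cases hq : q = 0
  · exact ⟨1, 0, one_ne_zero, ⟨0, isHomogeneous_one σ R⟩, by simp [hq]⟩
  set a := (homogeneousExpansion p).leadingCoeff
  set b := (homogeneousExpansion q).leadingCoeff
  have ha : a ≠ 0 := Polynomial.leadingCoeff_ne_zero.2 (homogeneousExpansion_eq_zero_iff.not.2 hp)
  have ha_hom := isHomogeneous_leadingCoeff_homogeneousExpansion p
  by_cases hr : a * q - b * p = 0
  · exact ⟨a, b, ha, ⟨_, ha_hom⟩, by linear_combination hr⟩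
  obtain ⟨s, u, hs, ⟨n, hs_hom⟩, hsu⟩ :=
    ih _ (hw ▸ degreeWidth_cancel_leading_lt hp hq (hmin q hqI hq) hr)
      (I.sub_mem (I.mul_mem_left a hqI) (I.mul_mem_left b hpI)) rfl
  exact ⟨s * a, u + s * b, mul_ne_zero hs ha, ⟨_, hs_hom.mul ha_hom⟩,
    by linear_combination hsu⟩

theorem exists_isHomogeneous_mem_of_not_isPrincipal [UniqueFactorizationMonoid R]
    {I : Ideal (MvPolynomial σ R)} (hI : I.IsPrime) (hnp : ¬ I.IsPrincipal) :
    ∃ p ∈ I, p ≠ 0 ∧ ∃ n, p.IsHomogeneous n := by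
  by_contra! hhom
  have hI0 : I ≠ ⊥ := by
    rintro rfl
    exact hnp bot_isPrincipal
  obtain ⟨p, ⟨hpI, hp⟩, hmin⟩ := (measure degreeWidth).wf.has_min {p | p ∈ I ∧ p ≠ 0}
    (Submodule.exists_mem_ne_zero_of_ne_bot hI0)
  obtain ⟨f, hfI, hf, hfp⟩ := hI.exists_prime_dvd_mem hpI hp
  have hfmin : ∀ q ∈ I, q ≠ 0 → degreeWidth f ≤ degreeWidth q := fun q hqI hq =>
    (degreeWidth_le_of_dvd hp hfp).trans (not_lt.1 (hmin q ⟨hqI, hq⟩))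
  refine hnp ⟨f, le_antisymm (fun q hqI => ?_) ((Ideal.span_singleton_le_iff_mem I).2 hfI)⟩
  obtain ⟨s, u, hs, ⟨n, hs_hom⟩, hsu⟩ :=
    exists_isHomogeneous_mul_eq_mul_of_degreeWidth_le hfI hf.ne_zero hfmin hqI
  -- `f ∤ s`, since otherwise the nonzero homogeneous `s` would lie in `I`
  refine Ideal.mem_span_singleton.2 ((hf.dvd_or_dvd ⟨u, hsu⟩).resolve_left fun hfs => ?_)
  exact hhom s (I.mem_of_dvd hfs hfI) hs n hs_hom

end MvPolynomial

/-- a non-principal prime ideal of `ℂ[Y₀,Y₁,Y₂]` contains a nonzero polynomial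
which is homogeneous with respect to total degree. -/
theorem stmt_17 (I : Ideal (MvPolynomial (Fin 3) ℂ)) (hI : I.IsPrime)
    (hnp : ¬ I.IsPrincipal) :
    ∃ p ∈ I, p ≠ 0 ∧ ∃ n : ℕ, p.IsHomogeneous n :=
  exists_isHomogeneous_mem_of_not_isPrincipal hI hnp
end

section
/- Let α, β, γ be real numbers with 0 < α < β < γ < 1 and γ > α + β, and set a = γ(1−α−β)+2αβ, b = (α+β)(γ−α−β)+2αβ−γ+1, c = γ(α+β−γ+1)−2αβ. Then η = (a+b)(a+c)(b+c)(ab+bc+ac) ≠ 0. -/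
/-- For real `α β γ` with `0 < α < β < γ < 1` and `γ > α + β`, setting
`a = γ(1−α−β)+2αβ`, `b = (α+β)(γ−α−β)+2αβ−γ+1`, `c = γ(α+β−γ+1)−2αβ`, the number
`η = (a+b)(a+c)(b+c)(ab+bc+ac)` is nonzero. -/
theorem stmt_18 (α β γ : ℝ) (h0 : 0 < α) (h1 : α < β) (h2 : β < γ) (h3 : γ < 1)
    (h4 : α + β < γ)
    (a b c : ℝ)
    (ha : a = γ * (1 - α - β) + 2 * α * β)
    (hb : b = (α + β) * (γ - α - β) + 2 * α * β - γ + 1)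
    (hc : c = γ * (α + β - γ + 1) - 2 * α * β) :
    (a + b) * (a + c) * (b + c) * (a * b + b * c + a * c) ≠ 0 := by
  subst ha hb hc
  have hb1 : β < 1 := h2.trans h3
  have ha1 : (0:ℝ) < γ * (1 - α - β) + 2 * α * β := by nlinarith
  have hb2 : (0:ℝ) < (α + β) * (γ - α - β) + 2 * α * β - γ + 1 := by nlinarith
  have hc1 : (0:ℝ) < γ * (α + β - γ + 1) - 2 * α * β := by
    nlinarith [mul_pos (sub_pos.mpr h4) (sub_pos.mpr h3),
      mul_pos (mul_pos h0 (sub_pos.mpr hb1)) (lt_trans h0 (h1.trans h2))]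
  positivity
end

section
/- Let α, β, γ be real numbers with 0 < α < β < γ < 1, and set a = γ(1−α−β)+2αβ, b = (α+β)(γ−α−β)+2αβ−γ+1, c = γ(α+β−γ+1)−2αβ. Then ab + ac + bc > 0. -/
/-- For real `α β γ` with `0 < α < β < γ < 1`, setting
`a = γ(1−α−β)+2αβ`, `b = (α+β)(γ−α−β)+2αβ−γ+1`, `c = γ(α+β−γ+1)−2αβ`, one has
`ab + ac + bc > 0`. -/
theorem stmt_19 (α β γ : ℝ) (h0 : 0 < α) (h1 : α < β) (h2 : β < γ) (h3 : γ < 1)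
    (a b c : ℝ)
    (ha : a = γ * (1 - α - β) + 2 * α * β)
    (hb : b = (α + β) * (γ - α - β) + 2 * α * β - γ + 1)
    (hc : c = γ * (α + β - γ + 1) - 2 * α * β) :
    a * b + a * c + b * c > 0 := by
  subst ha hb hc
  have hβ1 : β < 1 := h2.trans h3
  have hα1 : α < 1 := h1.trans hβ1
  have t1 : 0 < (γ - β) * (1 - γ) * ((1 - α) * (1 - β) + α * β) := by
    apply mul_pos (mul_pos (by linarith) (by linarith))
    nlinarith
  have t2 : 0 < (1 - γ) * (β * (1 - β + α * (β - α))) := by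
    apply mul_pos (by linarith)
    apply mul_pos (by linarith)
    nlinarith
  have t3 : 0 < (γ - β) * (β * (1 - β) + α * (1 - α) * ((1 - β) ^ 2 + β ^ 2)) := by
    apply mul_pos (by linarith)
    have : 0 < β * (1 - β) := mul_pos (h0.trans h1) (by linarith)
    have : 0 < α * (1 - α) * ((1 - β) ^ 2 + β ^ 2) := by
      apply mul_pos (mul_pos h0 (by linarith))
      nlinarith
    linarith
  nlinarith [mul_pos (show (0:ℝ) < 1 - β by linarith) t1, t2, t3]
end
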